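/- arXiv:2402.14529 — 2 statements merged into one kernel-verified Lean document; each statement's English description precedes it below -/
import Mathlib

section
/- Let T be a finite group, let φ be an automorphism of T, and let ℓ ≥ 1 be an integer. Define the twisted norm map N : T → T by N(y) = y · φ⁻¹(y) · φ⁻²(y) ⋯ φ^{-ℓ}(y) (the ordered product of φ^{-i}(y) for i = 0, 1, …, ℓ). If N is surjective, then the fixed-point subgroup of φ^{ℓ+1} equals the fixed-point subgroup of φ, that is, {z ∈ T : φ^{ℓ+1}(z) = z} = {z ∈ T : φ(z) = z}. -/
private lemma telescope {T : Type*} [Group T] (φ : MulAut T) (n : ℕ) (z : T) :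
    ((List.range n).map (fun i => (φ⁻¹ ^ i) (z⁻¹ * φ⁻¹ z))).prod = z⁻¹ * (φ⁻¹ ^ n) z := by
  induction n with
  | zero => simp
  | succ k ih =>
    rw [List.range_succ, List.map_append, List.prod_append, ih]
    simp only [List.map_cons, List.map_nil, List.prod_cons, List.prod_nil, mul_one,
      map_mul, map_inv, pow_succ, MulAut.mul_apply, mul_assoc, mul_inv_cancel_left]

/-- Let `T` be a finite group, `φ` an automorphism of `T` and `ℓ ≥ 1`. If the twisted norm
map `y ↦ y * φ⁻¹ y * φ⁻² y * ⋯ * φ^{-ℓ} y` is surjective, then the fixed points of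
`φ ^ (ℓ+1)` coincide with the fixed points of `φ`. -/
theorem stmt_5 {T : Type*} [Group T] [Finite T] (φ : MulAut T) (ℓ : ℕ) (hℓ : 1 ≤ ℓ)
    (hsurj : Function.Surjective
      (fun y : T => ((List.range (ℓ + 1)).map (fun i => (φ⁻¹ ^ i) y)).prod)) :
    ∀ z : T, (φ ^ (ℓ + 1)) z = z ↔ φ z = z := by
  intro z
  constructor
  · intro hz
    have hinj : Function.Injective
        (fun y : T => ((List.range (ℓ + 1)).map (fun i => (φ⁻¹ ^ i) y)).prod) :=
      Finite.injective_iff_surjective.mpr hsurj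
    -- (φ⁻¹ ^ (ℓ+1)) z = z
    have hz' : (φ⁻¹ ^ (ℓ + 1)) z = z := by
      have := congrArg (fun w => (φ⁻¹ ^ (ℓ + 1)) w) hz
      simpa [← MulAut.mul_apply, ← mul_pow] using this.symm
    have h1 : ((List.range (ℓ + 1)).map (fun i => (φ⁻¹ ^ i) (z⁻¹ * φ⁻¹ z))).prod
        = ((List.range (ℓ + 1)).map (fun i => (φ⁻¹ ^ i) (1 : T))).prod := by
      rw [telescope, hz']
      simp
    have := hinj h1
    have hfix : φ⁻¹ z = z := (inv_mul_eq_one.mp this).symm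
    calc φ z = φ (φ⁻¹ z) := by rw [hfix]
    _ = z := by simp
  · intro hz
    have key : ∀ n : ℕ, (φ ^ n) z = z := by
      intro n
      induction n with
      | zero => simp
      | succ k ih => rw [pow_succ, MulAut.mul_apply, hz, ih]
    exact key (ℓ + 1)
end

section
/- Let T be a finite non-abelian simple group, let p be a prime dividing the order of T, and let φ be an automorphism of T whose order is a power of p. Then the map T → T defined by y ↦ y · φ(y) · φ²(y) ⋯ φ^{p-1}(y) (the ordered product of φ^i(y) for i = 0, 1, …, p−1) is not bijective. -/
open Equiv.Perm MulAction

namespace Stmt6Aux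

variable {T : Type*} [Group T] {n : ℕ}

/-- Apply an automorphism componentwise to a vector with product one. -/
def vmap (ψ : MulAut T) (v : vectorsProdEqOne T n) : vectorsProdEqOne T n :=
  ⟨⟨v.1.1.map ψ, by rw [List.length_map]; exact v.1.2⟩, by
    show (v.1.1.map ψ).prod = 1
    rw [← map_list_prod ψ, show v.1.1.prod = 1 from v.2, map_one]⟩

theorem vmap_one (v : vectorsProdEqOne T n) : vmap 1 v = v := by
  apply Subtype.ext; apply Subtype.ext
  show v.1.1.map _ = v.1.1
  simp

theorem vmap_vmap (ψ₁ ψ₂ : MulAut T) (v : vectorsProdEqOne T n) :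
    vmap ψ₁ (vmap ψ₂ v) = vmap (ψ₁ * ψ₂) v := by
  apply Subtype.ext; apply Subtype.ext
  show (v.1.1.map ψ₂).map ψ₁ = v.1.1.map (ψ₁ * ψ₂)
  rw [List.map_map]; rfl

theorem vmap_rotate (ψ : MulAut T) (v : vectorsProdEqOne T n) (k : ℕ) :
    vmap ψ (VectorsProdEqOne.rotate v k) = VectorsProdEqOne.rotate (vmap ψ v) k := by
  apply Subtype.ext; apply Subtype.ext
  show (v.1.1.rotate k).map ψ = (v.1.1.map ψ).rotate k
  rw [List.map_rotate]

theorem rotate_congr (v : vectorsProdEqOne T n) {a b : ℕ} (h : a % n = b % n) :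
    VectorsProdEqOne.rotate v a = VectorsProdEqOne.rotate v b := by
  apply Subtype.ext; apply Subtype.ext
  show v.1.1.rotate a = v.1.1.rotate b
  rw [← List.rotate_mod v.1.1 a, ← List.rotate_mod v.1.1 b, v.1.2, h]

instance act (p : ℕ) [NeZero p] (φ : MulAut T) :
    MulAction (Multiplicative (ZMod p) × (Subgroup.zpowers φ)) (vectorsProdEqOne T p) where
  smul g v := vmap (g.2 : MulAut T) (VectorsProdEqOne.rotate v (g.1.toAdd).val)
  one_smul v := by
    show vmap ((1 : Subgroup.zpowers φ) : MulAut T)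
      (VectorsProdEqOne.rotate v ((1 : Multiplicative (ZMod p)).toAdd).val) = v
    have h0 : ((1 : Multiplicative (ZMod p)).toAdd).val = 0 := by
      show (0 : ZMod p).val = 0
      simp
    rw [h0, VectorsProdEqOne.rotate_zero]
    exact vmap_one v
  mul_smul g h v := by
    show vmap (((g.2 * h.2 : Subgroup.zpowers φ)) : MulAut T)
        (VectorsProdEqOne.rotate v ((g.1 * h.1).toAdd).val) =
      vmap (g.2 : MulAut T) (VectorsProdEqOne.rotate
        (vmap (h.2 : MulAut T) (VectorsProdEqOne.rotate v (h.1.toAdd).val)) (g.1.toAdd).val)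
    rw [← vmap_rotate, vmap_vmap, VectorsProdEqOne.rotate_rotate, ← Subgroup.coe_mul]
    congr 1
    apply rotate_congr
    have h1 : ((g.1 * h.1).toAdd) = g.1.toAdd + h.1.toAdd := rfl
    rw [h1, ZMod.val_add, Nat.mod_mod_of_dvd _ dvd_rfl, Nat.add_comm]

theorem smul_def (p : ℕ) [NeZero p] (φ : MulAut T)
    (g : Multiplicative (ZMod p) × (Subgroup.zpowers φ)) (v : vectorsProdEqOne T p) :
    g • v = vmap (g.2 : MulAut T) (VectorsProdEqOne.rotate v (g.1.toAdd).val) := rfl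

end Stmt6Aux

/-- Let `T` be a finite non-abelian simple group, `p` a prime dividing `|T|`, and `φ` an
automorphism of `T` of `p`-power order. Then the map
`y ↦ y * φ y * φ² y * ⋯ * φ^(p-1) y` is not bijective. -/
theorem stmt_6 {T : Type*} [Group T] [Finite T] [IsSimpleGroup T]
    (hna : ¬ ∀ x y : T, x * y = y * x)
    (p : ℕ) (hp : p.Prime) (hpT : p ∣ Nat.card T)
    (φ : MulAut T) (k : ℕ) (hφ : orderOf φ = p ^ k) :
    ¬ Function.Bijective
      (fun y : T => ((List.range p).map (fun i => (φ ^ i) y)).prod) := by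
  haveI : Fact p.Prime := ⟨hp⟩
  haveI : NeZero p := ⟨hp.ne_zero⟩
  haveI : Fact (1 < p) := ⟨hp.one_lt⟩
  haveI : Fintype T := Fintype.ofFinite T
  intro hbij
  set P := Multiplicative (ZMod p) × (Subgroup.zpowers φ) with hPdef
  set S := Equiv.Perm.vectorsProdEqOne T p with hSdef
  -- P is a p-group
  have h1 : IsPGroup p (Multiplicative (ZMod p)) :=
    IsPGroup.of_card (n := 1)
      (((Nat.card_congr Multiplicative.toAdd).trans (Nat.card_zmod p)).trans (pow_one p).symm)
  have h2 : IsPGroup p (Subgroup.zpowers φ) :=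
    IsPGroup.of_card (by rw [Nat.card_zpowers, hφ])
  have hP : IsPGroup p P := by
    intro g
    obtain ⟨n1, e1⟩ := h1 g.1
    obtain ⟨n2, e2⟩ := h2 g.2
    refine ⟨n1 + n2, ?_⟩
    have : g ^ p ^ (n1 + n2) = (g.1 ^ p ^ (n1 + n2), g.2 ^ p ^ (n1 + n2)) := rfl
    rw [this, Prod.mk_eq_one]
    constructor
    · rw [pow_add, pow_mul, e1, one_pow]
    · rw [pow_add, Nat.mul_comm, pow_mul, e2, one_pow]
  -- p divides the cardinality of S
  have hcardS : p ∣ Nat.card S := by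
    rw [hSdef, Nat.card_eq_fintype_card, Equiv.Perm.VectorsProdEqOne.card]
    refine Dvd.dvd.trans ?_ (dvd_pow dvd_rfl (Nat.sub_ne_zero_of_lt hp.one_lt))
    rwa [Nat.card_eq_fintype_card] at hpT
  -- hence p divides the number of fixed points
  have hmod := hP.card_modEq_card_fixedPoints S
  have hdvdfix : p ∣ Nat.card (fixedPoints P S) :=
    (Nat.modEq_zero_iff_dvd).mp (hmod.symm.trans ((Nat.modEq_zero_iff_dvd).mpr hcardS))
  -- the constant-one vector is a fixed point
  have hone : ((List.Vector.replicate p (1 : T)) : List.Vector T p) ∈ S := by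
    show (List.replicate p (1 : T)).prod = 1
    simp
  set v₀ : S := ⟨List.Vector.replicate p 1, hone⟩ with hv₀def
  have hv₀fix : v₀ ∈ fixedPoints P S := by
    intro g
    rw [Stmt6Aux.smul_def]
    apply Subtype.ext; apply Subtype.ext
    show ((List.replicate p (1 : T)).rotate _).map _ = List.replicate p (1 : T)
    rw [List.rotate_replicate, List.map_replicate, map_one]
  -- get a second fixed point
  have hpos : 0 < Nat.card (fixedPoints P S) := by
    have : Finite (fixedPoints P S) := Subtype.finite
    exact Nat.card_pos_iff.mpr ⟨⟨⟨v₀, hv₀fix⟩⟩, this⟩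
  have h2le : 2 ≤ Nat.card (fixedPoints P S) :=
    le_trans hp.two_le (Nat.le_of_dvd hpos hdvdfix)
  have : Nontrivial (fixedPoints P S) := by
    have := Subtype.finite (p := fun v => v ∈ fixedPoints P S)
    exact Finite.one_lt_card_iff_nontrivial.mp (by omega)
  obtain ⟨⟨w, hwfix⟩, hwne⟩ := exists_ne (⟨v₀, hv₀fix⟩ : fixedPoints P S)
  -- w is a constant vector
  have hrot : w.1.1.rotate 1 = w.1.1 := by
    have h := mem_fixedPoints.mp hwfix (Multiplicative.ofAdd (1 : ZMod p), 1)
    rw [Stmt6Aux.smul_def] at h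
    simp only [OneMemClass.coe_one, Stmt6Aux.vmap_one] at h
    have hval : ((Multiplicative.ofAdd (1 : ZMod p)).toAdd).val = 1 := ZMod.val_one p
    rw [hval] at h
    exact congrArg (fun v : S => v.1.1) h
  obtain ⟨x, hx⟩ := List.rotate_one_eq_self_iff_eq_replicate.mp hrot
  have hlen : w.1.1.length = p := w.1.2
  rw [hlen] at hx
  -- φ fixes x
  have hφx : φ x = x := by
    have h := mem_fixedPoints.mp hwfix (1, ⟨φ, Subgroup.mem_zpowers φ⟩)
    rw [Stmt6Aux.smul_def] at h
    have h0 : ((1 : Multiplicative (ZMod p)).toAdd).val = 0 := by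
      show (0 : ZMod p).val = 0; simp
    rw [h0, Equiv.Perm.VectorsProdEqOne.rotate_zero] at h
    have hlist := congrArg (fun v : S => v.1.1) h
    simp only [Stmt6Aux.vmap] at hlist
    rw [hx, List.map_replicate] at hlist
    have heq : List.replicate p (φ x) = List.replicate p x := by
      simpa [hx] using hlist
    exact List.replicate_right_injective hp.ne_zero heq
  -- x ^ p = 1
  have hxp : x ^ p = 1 := by
    have : w.1.1.prod = 1 := w.2
    rwa [hx, List.prod_replicate] at this
  -- x ≠ 1
  have hxne : x ≠ 1 := by
    intro h
    apply hwne
    apply Subtype.ext; apply Subtype.ext; apply Subtype.ext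
    show w.1.1 = List.replicate p (1 : T)
    rw [hx, h]
  -- now contradict injectivity
  have hφi : ∀ i : ℕ, (φ ^ i) x = x := by
    intro i
    induction i with
    | zero => rfl
    | succ n ih => rw [pow_succ, MulAut.mul_apply, hφx, ih]
  have hfx : ((List.range p).map (fun i => (φ ^ i) x)).prod = 1 := by
    have h1 : (List.range p).map (fun i => (φ ^ i) x) = (List.range p).map (fun _ => x) :=
      List.map_congr_left (fun i _ => hφi i)
    rw [h1, List.map_const', List.length_range, List.prod_replicate, hxp]
  have hf1 : ((List.range p).map (fun i => (φ ^ i) (1 : T))).prod = 1 := by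
    simp
  have := hbij.injective (a₁ := x) (a₂ := (1 : T)) (by simp only [hfx, hf1])
  exact hxne this
end
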